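/- arXiv:2604.25269 — 2 statements merged into one kernel-verified Lean document; each statement's English description precedes it below -/
import Mathlib

section
/- Let ℓ̂_1, …, ℓ̂_T be any sequence of (possibly random) loss-estimate vectors in ℝ^d, let Z̃ ∈ ℝ^d have i.i.d. standard exponential components and let S̃ ⊆ S be a nonempty random decision set, with (Z̃, S̃) independent of the estimates. Define the hypothetical forecaster Ṽ_t = argmin_{v ∈ S̃} vᵀ(η Σ_{s=1}^t ℓ̂_s − Z̃) for η > 0. Then for any fixed policy π, E[ Σ_{t=1}^T (Ṽ_t − π(S̃))ᵀ ℓ̂_t ] ≤ m(log d + 1)/η. -/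
/-!
Write `⟨v, x⟩ = ∑ i ∈ v, x i`. The forecaster `Ṽ_t` is the leader for the losses
`η ⟨·, ℓ̂_s⟩`, `s ≤ t`, regularized by `-⟨·, Z̃⟩`, so the be-the-leader inequality bounds its
regret against any `u ∈ S̃`, pathwise, by
`(max_{v ∈ S̃} ⟨v, Z̃⟩ - ⟨u, Z̃⟩) / η ≤ max_{v ∈ S̃} ⟨v, Z̃⟩ / η`.
Since every `v ∈ S` has at most `m` elements, `⟨v, Z̃⟩ ≤ m (c + ∑ᵢ (Z̃ᵢ - c)⁺)` for every `c ≥ 0`,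
and for a standard exponential `E (Z̃ᵢ - c)⁺ = e^{-c}`; the choice `c = log d` gives
`E max_{v ∈ S̃} ⟨v, Z̃⟩ ≤ m (log d + 1)`.
-/

open MeasureTheory ProbabilityTheory

noncomputable section

/-- Discrete (⊤) measurable structure on finsets. -/
instance finsetMeasurableSpace {α : Type*} : MeasurableSpace (Finset α) := ⊤

/-- The law of a perturbation vector in `ℝ^d` with i.i.d. standard exponential components. -/
def expPi (d : ℕ) : Measure (Fin d → ℝ) := Measure.pi fun _ : Fin d => expMeasure 1

section BeTheLeader

open Finset

theorem be_the_leader {α M : Type*} [AddCommMonoid M] [PartialOrder M] [IsOrderedAddMonoid M]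
    {A : Set α} {R : α → M} {r : M} (hr : ∀ v ∈ A, r ≤ R v) :
    ∀ {n : ℕ} (f : Fin n → α → M) (V : Fin n → α), (∀ t, V t ∈ A) →
      (∀ t, ∀ v ∈ A, ∑ s ∈ Iic t, f s (V t) + R (V t) ≤ ∑ s ∈ Iic t, f s v + R v) →
      ∀ u ∈ A, ∑ t, f t (V t) + r ≤ ∑ t, f t u + R u
  | 0, _, _, _, _, u, hu => by simpa using hr u hu
  | n + 1, f, V, hVA, hV, u, hu => by
    have hlast : Iic (Fin.last n) = univ := by rw [← Fin.top_eq_last, Iic_top]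
    have ih := be_the_leader hr (fun t => f t.castSucc) (fun t => V t.castSucc)
      (fun t => hVA _)
      (fun t v hv => by
        simpa only [← Fin.map_castSuccEmb_Iic, sum_map, Fin.coe_castSuccEmb]
          using hV t.castSucc v hv)
      (V (Fin.last n)) (hVA _)
    calc ∑ t, f t (V t) + r
        = (∑ t : Fin n, f t.castSucc (V t.castSucc) + r) + f (Fin.last n) (V (Fin.last n)) := by
          rw [Fin.sum_univ_castSucc]; abel
      _ ≤ (∑ t : Fin n, f t.castSucc (V (Fin.last n)) + R (V (Fin.last n)))
            + f (Fin.last n) (V (Fin.last n)) := by gcongr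
      _ = ∑ s ∈ Iic (Fin.last n), f s (V (Fin.last n)) + R (V (Fin.last n)) := by
          rw [hlast, Fin.sum_univ_castSucc]; abel
      _ ≤ ∑ s ∈ Iic (Fin.last n), f s u + R u := hV _ u hu
      _ = ∑ t, f t u + R u := by rw [hlast]

lemma sum_le_mul_add_sum_max_sub {ι : Type*} [Fintype ι] {v : Finset ι} {m : ℕ}
    (hv : #v ≤ m) (x : ι → ℝ) {c : ℝ} (hc : 0 ≤ c) :
    ∑ i ∈ v, x i ≤ m * (c + ∑ i, max (x i - c) 0) := by
  set B := c + ∑ i, max (x i - c) 0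
  have hxB : ∀ i, x i ≤ B := fun i => by
    have := single_le_sum (fun j _ => le_max_right (x j - c) 0) (mem_univ i)
    linarith [le_max_left (x i - c) 0]
  have hB : 0 ≤ B := add_nonneg hc (sum_nonneg fun i _ => le_max_right _ _)
  calc ∑ i ∈ v, x i ≤ #v * B := by simpa using sum_le_card_nsmul v x B fun i _ => hxB i
    _ ≤ m * B := by gcongr

lemma perturbed_leader_regret_le {ι : Type*} {T : ℕ} {η K : ℝ} (hη : 0 < η)
    {A : Finset (Finset ι)} (ℓ : Fin T → ι → ℝ) {Z : ι → ℝ} (hZ : ∀ i, 0 ≤ Z i)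
    (hK : ∀ v ∈ A, ∑ i ∈ v, Z i ≤ K) {V : Fin T → Finset ι} (hVA : ∀ t, V t ∈ A)
    (hV : ∀ t, ∀ v ∈ A, ∑ i ∈ V t, (η * (∑ s ∈ Iic t, ℓ s i) - Z i)
        ≤ ∑ i ∈ v, (η * (∑ s ∈ Iic t, ℓ s i) - Z i))
    {u : Finset ι} (hu : u ∈ A) :
    ∑ t, (∑ i ∈ V t, ℓ t i - ∑ i ∈ u, ℓ t i) ≤ K / η := by
  have hpot : ∀ t (v : Finset ι), ∑ i ∈ v, (η * (∑ s ∈ Iic t, ℓ s i) - Z i)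
      = ∑ s ∈ Iic t, η * ∑ i ∈ v, ℓ s i + -∑ i ∈ v, Z i := fun t v => by
    rw [sum_sub_distrib, sub_eq_add_neg]
    simp only [← mul_sum]
    rw [sum_comm]
  have := be_the_leader (A := (A : Set (Finset ι))) (R := fun v => -∑ i ∈ v, Z i)
    (fun v hv => neg_le_neg (hK v hv)) (fun t v => η * ∑ i ∈ v, ℓ t i) V hVA
    (fun t v hv => by simpa only [hpot] using hV t v hv) u hu
  have hZu : 0 ≤ ∑ i ∈ u, Z i := sum_nonneg fun i _ => hZ i
  simp only [← mul_sum] at this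
  rw [le_div_iff₀' hη, sum_sub_distrib, mul_sub]
  linarith

end BeTheLeader

section ExponentialTail

open Real Set

lemma hasDerivAt_neg_sub_add_one_mul_exp_neg (c x : ℝ) :
    HasDerivAt (fun y => -((y - c + 1) * exp (-y))) ((x - c) * exp (-x)) x := by
  have h₁ : HasDerivAt (fun y => y - c + 1) 1 x := ((hasDerivAt_id' x).sub_const c).add_const 1
  have h₂ : HasDerivAt (fun y => exp (-y)) (-exp (-x)) x := by
    simpa using (hasDerivAt_neg' x).exp
  exact (h₁.mul h₂).neg.congr_deriv (by ring)

lemma tendsto_neg_sub_add_one_mul_exp_neg_atTop (c : ℝ) :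
    Filter.Tendsto (fun y => -((y - c + 1) * exp (-y))) Filter.atTop (nhds 0) := by
  have h := ((tendsto_pow_mul_exp_neg_atTop_nhds_zero 1).add
    (tendsto_exp_neg_atTop_nhds_zero.const_mul (1 - c))).neg
  simp only [pow_one, mul_zero, add_zero, neg_zero] at h
  convert h using 2 with y
  ring

lemma sub_mul_exp_neg_nonneg {c x : ℝ} (hx : x ∈ Ioi c) : 0 ≤ (x - c) * exp (-x) :=
  mul_nonneg (sub_nonneg.2 (le_of_lt hx)) (exp_pos _).le

lemma integrableOn_Ioi_sub_mul_exp_neg (c : ℝ) :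
    IntegrableOn (fun x => (x - c) * exp (-x)) (Ioi c) :=
  integrableOn_Ioi_deriv_of_nonneg' (fun x _ => hasDerivAt_neg_sub_add_one_mul_exp_neg c x)
    (fun _ => sub_mul_exp_neg_nonneg) (tendsto_neg_sub_add_one_mul_exp_neg_atTop c)

lemma integral_Ioi_sub_mul_exp_neg (c : ℝ) : ∫ x in Ioi c, (x - c) * exp (-x) = exp (-c) := by
  rw [integral_Ioi_of_hasDerivAt_of_nonneg' (fun x _ => hasDerivAt_neg_sub_add_one_mul_exp_neg c x)
    (fun _ => sub_mul_exp_neg_nonneg) (tendsto_neg_sub_add_one_mul_exp_neg_atTop c)]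
  simp

lemma exponentialPDF_one_toReal_smul_max_sub {c : ℝ} (hc : 0 ≤ c) :
    (fun x => (exponentialPDF 1 x).toReal • max (x - c) 0)
      = (Ioi c).indicator (fun x => (x - c) * exp (-x)) := by
  funext x
  rw [exponentialPDF_eq, ENNReal.toReal_ofReal (by positivity), smul_eq_mul]
  by_cases hx : x ∈ Ioi c
  · rw [Set.indicator_of_mem hx, if_pos (hc.trans (le_of_lt hx)),
      max_eq_left (sub_nonneg.2 (le_of_lt hx)), one_mul, one_mul, mul_comm]
  · rw [Set.indicator_of_notMem hx, max_eq_right (sub_nonpos.2 (not_lt.1 hx)), mul_zero]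

lemma measurable_exponentialPDF (r : ℝ) : Measurable (exponentialPDF r) :=
  (measurable_exponentialPDFReal r).ennreal_ofReal

lemma integrable_max_sub_expMeasure_one {c : ℝ} (hc : 0 ≤ c) :
    Integrable (fun x => max (x - c) 0) (expMeasure 1) := by
  rw [show expMeasure 1 = volume.withDensity (exponentialPDF 1) from rfl,
    integrable_withDensity_iff_integrable_smul' (measurable_exponentialPDF 1)
      (ae_of_all _ fun _ => ENNReal.ofReal_lt_top), exponentialPDF_one_toReal_smul_max_sub hc,
    integrable_indicator_iff measurableSet_Ioi]
  exact integrableOn_Ioi_sub_mul_exp_neg c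

lemma integral_max_sub_expMeasure_one {c : ℝ} (hc : 0 ≤ c) :
    ∫ x, max (x - c) 0 ∂expMeasure 1 = exp (-c) := by
  rw [show expMeasure 1 = volume.withDensity (exponentialPDF 1) from rfl,
    integral_withDensity_eq_integral_toReal_smul (measurable_exponentialPDF 1)
      (ae_of_all _ fun _ => ENNReal.ofReal_lt_top), exponentialPDF_one_toReal_smul_max_sub hc,
    integral_indicator measurableSet_Ioi]
  exact integral_Ioi_sub_mul_exp_neg c

lemma ae_nonneg_expMeasure (r : ℝ) : ∀ᵐ x ∂expMeasure r, 0 ≤ x := by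
  rw [ae_iff]
  simp only [not_le]
  rw [show {x : ℝ | x < 0} = Iio 0 from rfl,
    show expMeasure r = volume.withDensity (exponentialPDF r) from rfl,
    withDensity_apply _ measurableSet_Iio]
  exact lintegral_exponentialPDF_of_nonpos le_rfl

end ExponentialTail

section ExponentialPerturbation

open Real

variable {Ω : Type*} [MeasurableSpace Ω] {μ : Measure Ω} {d : ℕ} {Z : Ω → Fin d → ℝ}

lemma measurePreserving_eval_expPi (i : Fin d) :
    MeasurePreserving (Function.eval i) (expPi d) (expMeasure 1) :=
  have := isProbabilityMeasure_expMeasure one_pos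
  measurePreserving_eval _ i

lemma ae_nonneg_of_measurePreserving_expPi (hZ : MeasurePreserving Z μ (expPi d)) :
    ∀ᵐ ω ∂μ, ∀ i, 0 ≤ Z ω i :=
  ae_all_iff.2 fun i =>
    ((measurePreserving_eval_expPi i).comp hZ).quasiMeasurePreserving.ae (ae_nonneg_expMeasure 1)

lemma integrable_max_sub_of_measurePreserving_expPi (hZ : MeasurePreserving Z μ (expPi d))
    {c : ℝ} (hc : 0 ≤ c) (i : Fin d) : Integrable (fun ω => max (Z ω i - c) 0) μ :=
  ((measurePreserving_eval_expPi i).comp hZ).integrable_comp_of_integrable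
    (integrable_max_sub_expMeasure_one hc)

lemma integral_sum_max_sub_of_measurePreserving_expPi (hZ : MeasurePreserving Z μ (expPi d))
    {c : ℝ} (hc : 0 ≤ c) : ∫ ω, ∑ i, max (Z ω i - c) 0 ∂μ = d * exp (-c) := by
  have hcoord (i : Fin d) : ∫ ω, max (Z ω i - c) 0 ∂μ = exp (-c) := by
    have hZi := (measurePreserving_eval_expPi i).comp hZ
    rw [← integral_max_sub_expMeasure_one hc, ← hZi.map_eq,
      integral_map hZi.aemeasurable (by fun_prop)]
    rfl
  rw [integral_finsetSum _ fun i _ => integrable_max_sub_of_measurePreserving_expPi hZ hc i]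
  simp [hcoord]

end ExponentialPerturbation

theorem hypothetical_forecaster_regret_general
    (d m T : ℕ) (hd : 0 < d)
    (S : Finset (Finset (Fin d)))
    (hm : ∀ v ∈ S, v.card ≤ m)
    (η : ℝ) (hη : 0 < η)
    {Ω : Type*} [MeasurableSpace Ω] (μ : Measure Ω) [IsProbabilityMeasure μ]
    -- the loss estimates
    (lhat : Fin T → Ω → Fin d → ℝ)
    -- the time-independent perturbation and decision set
    (Ztilde : Ω → Fin d → ℝ) (hZMeas : Measurable Ztilde)
    (hZLaw : μ.map Ztilde = expPi d)
    (Stilde : Ω → Finset (Finset (Fin d)))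
    (hSsub : ∀ ω, Stilde ω ⊆ S ∧ (Stilde ω).Nonempty)
    -- the hypothetical forecaster
    (Vtilde : Fin T → Ω → Finset (Fin d))
    (hVmem : ∀ t ω, Vtilde t ω ∈ Stilde ω)
    (hVmin : ∀ t ω, ∀ v ∈ Stilde ω,
      ∑ i ∈ Vtilde t ω, (η * (∑ s ∈ Finset.Iic t, lhat s ω i) - Ztilde ω i)
        ≤ ∑ i ∈ v, (η * (∑ s ∈ Finset.Iic t, lhat s ω i) - Ztilde ω i))
    -- a fixed policy
    (π : Finset (Finset (Fin d)) → Finset (Fin d))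
    (hπ : ∀ A : Finset (Finset (Fin d)), A.Nonempty → π A ∈ A)
    -- integrability of the relevant quantities
    (hint₁ : ∀ t, Integrable (fun ω => ∑ i ∈ Vtilde t ω, lhat t ω i) μ)
    (hint₂ : ∀ t, Integrable (fun ω => ∑ i ∈ π (Stilde ω), lhat t ω i) μ) :
    ∑ t, ∫ ω, ((∑ i ∈ Vtilde t ω, lhat t ω i) - ∑ i ∈ π (Stilde ω), lhat t ω i) ∂μ
      ≤ (m : ℝ) * (Real.log d + 1) / η := by
  have hc : 0 ≤ Real.log d := Real.log_natCast_nonneg d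
  have hZ : MeasurePreserving Ztilde μ (expPi d) := ⟨hZMeas, hZLaw⟩
  have hregret : ∀ᵐ ω ∂μ, ∑ t, ((∑ i ∈ Vtilde t ω, lhat t ω i) - ∑ i ∈ π (Stilde ω), lhat t ω i)
      ≤ m * (Real.log d + ∑ i, max (Ztilde ω i - Real.log d) 0) / η := by
    filter_upwards [ae_nonneg_of_measurePreserving_expPi hZ] with ω hZω
    exact perturbed_leader_regret_le hη (fun t => lhat t ω) hZω
      (fun v hv => sum_le_mul_add_sum_max_sub (hm v ((hSsub ω).1 hv)) _ hc)
      (hVmem · ω) (hVmin · ω) (hπ _ (hSsub ω).2)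
  have hsum := integrable_finsetSum Finset.univ fun i _ =>
    integrable_max_sub_of_measurePreserving_expPi hZ hc i
  calc ∑ t, ∫ ω, ((∑ i ∈ Vtilde t ω, lhat t ω i) - ∑ i ∈ π (Stilde ω), lhat t ω i) ∂μ
      = ∫ ω, ∑ t, ((∑ i ∈ Vtilde t ω, lhat t ω i) - ∑ i ∈ π (Stilde ω), lhat t ω i) ∂μ :=
        (integral_finsetSum _ fun t _ => (hint₁ t).sub (hint₂ t)).symm
    _ ≤ ∫ ω, m * (Real.log d + ∑ i, max (Ztilde ω i - Real.log d) 0) / η ∂μ :=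
        integral_mono_ae (integrable_finsetSum _ fun t _ => (hint₁ t).sub (hint₂ t))
          ((((integrable_const _).add hsum).const_mul _).div_const _) hregret
    _ = m * (Real.log d + d * Real.exp (-Real.log d)) / η := by
        rw [integral_div, integral_const_mul, integral_add (integrable_const _) hsum,
          integral_sum_max_sub_of_measurePreserving_expPi hZ hc]
        simp
    _ = m * (Real.log d + 1) / η := by
        rw [Real.exp_neg, Real.exp_log (by positivity), mul_inv_cancel₀ (by positivity)]

/-- **Regret of the hypothetical one-step-lookahead perturbed forecaster (Lemma 1).**
Decision vectors in `{0,1}^d` are encoded by their supports (finsets of coordinates);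
`S` is the decision space, with `‖v‖₁ ≤ m` for all `v ∈ S`. Given any sequence of
(possibly random) loss-estimate vectors `ℓ̂_1, …, ℓ̂_T`, a perturbation `Z̃` with i.i.d.
standard exponential components and a nonempty random decision set `S̃ ⊆ S`, with
`(Z̃, S̃)` independent of the estimates, the hypothetical forecaster
`Ṽ_t = argmin_{v ∈ S̃} vᵀ(η ∑_{s ≤ t} ℓ̂_s - Z̃)` satisfies, for every fixed policy `π`,
`E[∑_t (Ṽ_t - π(S̃))ᵀ ℓ̂_t] ≤ m (log d + 1)/η`. -/
theorem hypothetical_forecaster_regret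
    (d m T : ℕ) (hd : 0 < d)
    (S : Finset (Finset (Fin d))) (hS : S.Nonempty)
    (hm : ∀ v ∈ S, v.card ≤ m)
    (η : ℝ) (hη : 0 < η)
    {Ω : Type*} [MeasurableSpace Ω] (μ : Measure Ω) [IsProbabilityMeasure μ]
    -- the loss estimates
    (lhat : Fin T → Ω → Fin d → ℝ) (hlhatMeas : ∀ t, Measurable (lhat t))
    -- the time-independent perturbation and decision set
    (Ztilde : Ω → Fin d → ℝ) (hZMeas : Measurable Ztilde)
    (hZLaw : μ.map Ztilde = expPi d)
    (Stilde : Ω → Finset (Finset (Fin d))) (hSMeas : Measurable Stilde)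
    (hSsub : ∀ ω, Stilde ω ⊆ S ∧ (Stilde ω).Nonempty)
    -- (Z̃, S̃) is independent of the loss estimates
    (hIndep : IndepFun (fun ω => (Ztilde ω, Stilde ω)) (fun ω t => lhat t ω) μ)
    -- the hypothetical forecaster
    (Vtilde : Fin T → Ω → Finset (Fin d))
    (hVmem : ∀ t ω, Vtilde t ω ∈ Stilde ω)
    (hVmin : ∀ t ω, ∀ v ∈ Stilde ω,
      ∑ i ∈ Vtilde t ω, (η * (∑ s ∈ Finset.Iic t, lhat s ω i) - Ztilde ω i)
        ≤ ∑ i ∈ v, (η * (∑ s ∈ Finset.Iic t, lhat s ω i) - Ztilde ω i))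
    -- a fixed policy
    (π : Finset (Finset (Fin d)) → Finset (Fin d))
    (hπ : ∀ A : Finset (Finset (Fin d)), A.Nonempty → π A ∈ A)
    -- integrability of the relevant quantities
    (hint₁ : ∀ t, Integrable (fun ω => ∑ i ∈ Vtilde t ω, lhat t ω i) μ)
    (hint₂ : ∀ t, Integrable (fun ω => ∑ i ∈ π (Stilde ω), lhat t ω i) μ) :
    ∑ t, ∫ ω, ((∑ i ∈ Vtilde t ω, lhat t ω i) - ∑ i ∈ π (Stilde ω), lhat t ω i) ∂μ
      ≤ (m : ℝ) * (Real.log d + 1) / η :=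
  hypothetical_forecaster_regret_general d m T hd S hm η hη μ lhat Ztilde hZMeas hZLaw Stilde hSsub
    Vtilde hVmem hVmin π hπ hint₁ hint₂

end
end

section
/- Fix η > 0, a vector L ∈ ℝ^d, a nonempty random decision set S̃ ⊆ S, a perturbation vector Z̃ ∈ ℝ^d with i.i.d. standard exponential components independent of S̃, and a random nonnegative vector ℓ̂ ∈ ℝ^d_{≥0} independent of Z̃ (given S̃ and the past). Let Ṽ = argmin_{v ∈ S̃} vᵀ(ηL − Z̃) and Ṽ' = argmin_{v ∈ S̃} vᵀ(η(L + ℓ̂) − Z̃). Then E[(Ṽ − Ṽ')ᵀ ℓ̂] ≤ η · E[(Ṽᵀ ℓ̂)²]. -/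
open MeasureTheory ProbabilityTheory

noncomputable section

/-!
Conditionally on `(S̃, ℓ̂)` the perturbation `Z̃` is still i.i.d. exponential, so ties have
probability zero and both leaders are a.s. unique minimizers, with conditional laws
`P(Ṽ = v) = p_v(ηL)` and `P(Ṽ' = v) = p_v(η(L + ℓ̂))`, where `p_v(θ) = winProb θ S̃ v` is the
probability that `v` uniquely minimizes `θ - Z`. Lowering `Z` by `ηℓ̂` on the coordinates of `v`
raises the cost of `v` by exactly as much as adding `ηℓ̂` to `L` does, and every other cost by at
most that much, so it maps `{v wins under ηL}` into `{v wins under η(L + ℓ̂)}`. By memorylessness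
of the exponential law the shift loses at most a factor `exp (-η vᵀℓ̂) ≥ 1 - η vᵀℓ̂`, whence
`p_v(ηL) (1 - η vᵀℓ̂) ≤ p_v(η(L + ℓ̂))`. Multiplying by `vᵀℓ̂` and summing over `v` gives the
inequality conditionally on `(S̃, ℓ̂)`; integrating gives the claim.
-/

instance isProbabilityMeasure_expMeasure_one : IsProbabilityMeasure (expMeasure 1) :=
  isProbabilityMeasure_expMeasure one_pos

instance isProbabilityMeasure_expPi (d : ℕ) : IsProbabilityMeasure (expPi d) := by
  unfold expPi; infer_instance

section Exponential

open Real Set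
open scoped ENNReal

theorem MeasureTheory.Measure.pi_smul_of_ne_top {ι : Type*} [Fintype ι] {α : ι → Type*}
    [∀ i, MeasurableSpace (α i)] (μ : ∀ i, Measure (α i)) [∀ i, IsFiniteMeasure (μ i)]
    {c : ι → ℝ≥0∞} (hc : ∀ i, c i ≠ ∞) :
    Measure.pi (fun i => c i • μ i) = (∏ i, c i) • Measure.pi μ := by
  have (i : ι) : IsFiniteMeasure (c i • μ i) := (μ i).smul_finite (hc i)
  refine Measure.pi_eq fun s hs => ?_
  simp [Measure.pi_pi, Finset.prod_mul_distrib]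

theorem MeasureTheory.Measure.AbsolutelyContinuous.pi {n : ℕ} {α : Fin n → Type*}
    [∀ i, MeasurableSpace (α i)] {μ ν : ∀ i, Measure (α i)} [∀ i, SigmaFinite (μ i)]
    [∀ i, SigmaFinite (ν i)] (h : ∀ i, μ i ≪ ν i) : Measure.pi μ ≪ Measure.pi ν := by
  induction n with
  | zero => rw [Measure.pi_of_empty μ, Measure.pi_of_empty ν]
  | succ n ih =>
    let e := MeasurableEquiv.piFinSuccAbove α 0
    rw [← e.map_symm_map (μ := Measure.pi μ), ← e.map_symm_map (μ := Measure.pi ν),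
      (measurePreserving_piFinSuccAbove μ 0).map_eq, (measurePreserving_piFinSuccAbove ν 0).map_eq]
    exact ((h 0).prod (ih fun i => h _)).map e.symm.measurable

theorem expMeasure_restrict_map_sub {a : ℝ} (ha : 0 ≤ a) :
    ((expMeasure 1).restrict (Ici a)).map (· - a) = ENNReal.ofReal (exp (-a)) • expMeasure 1 := by
  have hsub : Measurable (· - a : ℝ → ℝ) := measurable_sub_const a
  ext s hs
  have hpt (y : ℝ) : ((· - a) ⁻¹' s ∩ Ici a).indicator (exponentialPDF 1) (y + a)
      = ENNReal.ofReal (exp (-a)) * s.indicator (exponentialPDF 1) y := by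
    by_cases hys : y ∈ s
    · rcases le_or_gt 0 y with hy | hy
      · simp [hys, hy, exponentialPDF_of_nonneg, ha, add_nonneg, add_comm, exp_add,
          ENNReal.ofReal_mul (exp_nonneg _)]
      · simp [hys, hy.not_ge, exponentialPDF_of_neg hy]
    · simp [hys]
  rw [Measure.map_apply hsub hs, Measure.restrict_apply (hsub hs), Measure.smul_apply,
    smul_eq_mul, show expMeasure 1 = volume.withDensity (exponentialPDF 1) from rfl,
    withDensity_apply _ ((hsub hs).inter measurableSet_Ici),
    withDensity_apply _ hs, ← lintegral_indicator ((hsub hs).inter measurableSet_Ici),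
    ← lintegral_indicator hs, ← lintegral_add_right_eq_self _ a, lintegral_congr hpt,
    lintegral_const_mul' _ _ ENNReal.ofReal_ne_top]

theorem expPi_restrict_map_sub {d : ℕ} {a : Fin d → ℝ} (ha : 0 ≤ a) :
    ((expPi d).restrict (univ.pi fun i => Ici (a i))).map (· - a)
      = ENNReal.ofReal (exp (-∑ i, a i)) • expPi d := by
  rw [expPi, Measure.restrict_pi_pi, show (· - a) = fun z i => z i - a i from rfl,
    Measure.pi_map_pi fun i => (measurable_sub_const (a i)).aemeasurable]
  simp_rw [expMeasure_restrict_map_sub (ha _)]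
  rw [Measure.pi_smul_of_ne_top _ fun _ => ENNReal.ofReal_ne_top,
    ← ENNReal.ofReal_prod_of_nonneg fun _ _ => (exp_pos _).le, ← exp_sum, Finset.sum_neg_distrib]

theorem exp_neg_sum_smul_expPi_le_map_sub {d : ℕ} {a : Fin d → ℝ} (ha : 0 ≤ a) :
    ENNReal.ofReal (exp (-∑ i, a i)) • expPi d ≤ (expPi d).map (· - a) := by
  rw [← expPi_restrict_map_sub ha]
  exact Measure.map_mono Measure.restrict_le_self (measurable_sub_const a)

theorem LinearMap.addHaar_preimage_singleton {E : Type*} [NormedAddCommGroup E]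
    [NormedSpace ℝ E] [MeasurableSpace E] [BorelSpace E] [FiniteDimensional ℝ E]
    (μ : Measure E) [μ.IsAddHaarMeasure] {f : E →ₗ[ℝ] ℝ} (hf : f ≠ 0) (c : ℝ) :
    μ (f ⁻¹' {c}) = 0 := by
  obtain ⟨z₀, rfl⟩ := f.surjective_of_ne_zero hf c
  have : f ⁻¹' {f z₀} = (· + -z₀) ⁻¹' (LinearMap.ker f : Set E) := by
    ext z; simp [← sub_eq_add_neg, sub_eq_zero]
  rw [this, measure_preimage_add_right]
  exact Measure.addHaar_submodule μ _ (by simpa [LinearMap.ker_eq_top] using hf)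

theorem expPi_absolutelyContinuous (d : ℕ) : expPi d ≪ volume :=
  Measure.AbsolutelyContinuous.pi fun _ => withDensity_absolutelyContinuous _ _

theorem ae_expPi_sum_ne {d : ℕ} (θ : Fin d → ℝ) {u v : Finset (Fin d)} (huv : u ≠ v) :
    ∀ᵐ z ∂expPi d, ∑ i ∈ u, (θ - z) i ≠ ∑ i ∈ v, (θ - z) i := by
  classical
  obtain ⟨j, hj⟩ : ∃ j, (j ∈ u ↔ j ∉ v) := by
    by_contra! h
    exact huv (Finset.ext fun j => by have := h j; tauto)
  let f : (Fin d → ℝ) →ₗ[ℝ] ℝ := ∑ i ∈ u, LinearMap.proj i - ∑ i ∈ v, LinearMap.proj i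
  have hfj : f (Pi.single j 1) ≠ 0 := by by_cases hju : j ∈ u <;> simp_all [f]
  have hf : f ≠ 0 := fun h => hfj (by simp [h])
  refine measure_mono_null (fun z hz => ?_) (expPi_absolutelyContinuous d
    (f.addHaar_preimage_singleton volume hf (∑ i ∈ u, θ i - ∑ i ∈ v, θ i)))
  have hz : ∑ i ∈ u, (θ i - z i) = ∑ i ∈ v, (θ i - z i) := by simpa using hz
  simp only [Finset.sum_sub_distrib] at hz
  simp only [mem_preimage, LinearMap.sub_apply, LinearMap.coe_sum, LinearMap.coe_proj,
    Finset.sum_apply, Function.eval, mem_singleton_iff, f]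
  linarith

end Exponential

section UniqueMin

variable {ι : Type*}

def IsUniqueMin (c : ι → ℝ) (s : Finset (Finset ι)) (v : Finset ι) : Prop :=
  v ∈ s ∧ ∀ u ∈ s, u ≠ v → ∑ i ∈ v, c i < ∑ i ∈ u, c i

theorem IsUniqueMin.eq {c : ι → ℝ} {s : Finset (Finset ι)} {v w : Finset ι}
    (hv : IsUniqueMin c s v) (hw : IsUniqueMin c s w) : v = w := by
  by_contra h
  exact lt_asymm (hv.2 w hw.1 (Ne.symm h)) (hw.2 v hv.1 h)

theorem isUniqueMin_of_forall_le {c : ι → ℝ} {s : Finset (Finset ι)} {v : Finset ι} (hv : v ∈ s)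
    (hmin : ∀ u ∈ s, ∑ i ∈ v, c i ≤ ∑ i ∈ u, c i)
    (hne : ∀ u w : Finset ι, u ≠ w → ∑ i ∈ u, c i ≠ ∑ i ∈ w, c i) : IsUniqueMin c s v :=
  ⟨hv, fun u hu huv => (hmin u hu).lt_of_ne (hne v u huv.symm)⟩

theorem IsUniqueMin.mono {c c' : ι → ℝ} {s : Finset (Finset ι)} {v : Finset ι}
    (h : IsUniqueMin c s v) (hle : c ≤ c') (heq : ∀ i ∈ v, c' i = c i) : IsUniqueMin c' s v :=
  ⟨h.1, fun u hu huv => calc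
    ∑ i ∈ v, c' i = ∑ i ∈ v, c i := Finset.sum_congr rfl heq
    _ < ∑ i ∈ u, c i := h.2 u hu huv
    _ ≤ ∑ i ∈ u, c' i := Finset.sum_le_sum fun i _ => hle i⟩

theorem Measurable.isUniqueMin [Countable ι] {α : Type*} [MeasurableSpace α] {c : α → ι → ℝ}
    {σ : α → Finset (Finset ι)} (hc : Measurable c) (hσ : Measurable σ) (v : Finset ι) :
    Measurable fun x => IsUniqueMin (c x) (σ x) v := by
  have hmem (u : Finset ι) : Measurable fun x => u ∈ σ x :=
    measurableSet_setOfPred.1 (hσ (t := {t | u ∈ t}) trivial)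
  unfold IsUniqueMin
  fun_prop

variable [Fintype ι]

open scoped Classical in
/-- The value of `g` at the unique minimizer of `c` over `s`; `0` if there is none. -/
def uniqueMinValue (c : ι → ℝ) (s : Finset (Finset ι)) (g : Finset ι → ℝ) : ℝ :=
  ∑ v, if IsUniqueMin c s v then g v else 0

theorem IsUniqueMin.uniqueMinValue_eq {c : ι → ℝ} {s : Finset (Finset ι)} {v : Finset ι}
    (h : IsUniqueMin c s v) (g : Finset ι → ℝ) : uniqueMinValue c s g = g v := by
  rw [uniqueMinValue, Finset.sum_eq_single v (fun u _ hu => if_neg fun h' => hu (h'.eq h))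
    (by simp), if_pos h]

theorem measurable_uniqueMinValue :
    Measurable fun p : (ι → ℝ) × Finset (Finset ι) × (Finset ι → ℝ) =>
      uniqueMinValue p.1 p.2.1 p.2.2 :=
  Finset.measurable_sum _ fun v _ =>
    Measurable.ite (measurable_fst.isUniqueMin (measurable_fst.comp measurable_snd) v).setOf
      ((measurable_pi_apply v).comp (measurable_snd.comp measurable_snd)) measurable_const

theorem measurable_uniqueMinValue_comp {γ : Type*} [MeasurableSpace γ] {θ : γ → ι → ℝ}
    {σ : γ → Finset (Finset ι)} {g : γ → Finset ι → ℝ} (hθ : Measurable θ) (hσ : Measurable σ)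
    (hg : Measurable g) :
    Measurable fun x : (ι → ℝ) × γ => uniqueMinValue (θ x.2 - x.1) (σ x.2) (g x.2) :=
  measurable_uniqueMinValue.comp (((hθ.comp measurable_snd).sub measurable_fst).prodMk
    ((hσ.comp measurable_snd).prodMk (hg.comp measurable_snd)))

theorem ae_eq_uniqueMinValue {Ω : Type*} [MeasurableSpace Ω] {μ : Measure Ω}
    {c : Ω → ι → ℝ} {s : Ω → Finset (Finset ι)} {V : Ω → Finset ι}
    (hV : ∀ᵐ ω ∂μ, IsUniqueMin (c ω) (s ω) (V ω)) (g : Ω → Finset ι → ℝ) :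
    (fun ω => g ω (V ω)) =ᵐ[μ] fun ω => uniqueMinValue (c ω) (s ω) (g ω) :=
  hV.mono fun _ hω => (hω.uniqueMinValue_eq _).symm

end UniqueMin

section WinProb

open Real

variable {d : ℕ}

def winProb (θ : Fin d → ℝ) (s : Finset (Finset (Fin d))) (v : Finset (Fin d)) : ℝ :=
  (expPi d).real {z | IsUniqueMin (θ - z) s v}

theorem measurableSet_isUniqueMin_sub (θ : Fin d → ℝ) (s : Finset (Finset (Fin d)))
    (v : Finset (Fin d)) : MeasurableSet {z : Fin d → ℝ | IsUniqueMin (θ - z) s v} :=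
  (Measurable.isUniqueMin (measurable_const.sub measurable_id) measurable_const v).setOf

theorem integral_uniqueMinValue (θ : Fin d → ℝ) (s : Finset (Finset (Fin d)))
    (g : Finset (Fin d) → ℝ) :
    ∫ z, uniqueMinValue (θ - z) s g ∂expPi d = ∑ v, winProb θ s v * g v := by
  classical
  have hind (v : Finset (Fin d)) : (fun z => if IsUniqueMin (θ - z) s v then g v else 0)
      = {z | IsUniqueMin (θ - z) s v}.indicator fun _ => g v := by
    ext z; simp [Set.indicator_apply]
  simp only [uniqueMinValue]
  rw [integral_finsetSum _ fun v _ => by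
    rw [hind]; exact (integrable_const _).indicator (measurableSet_isUniqueMin_sub θ s v)]
  refine Finset.sum_congr rfl fun v _ => ?_
  rw [hind, integral_indicator_const _ (measurableSet_isUniqueMin_sub θ s v), smul_eq_mul, winProb]

theorem winProb_mul_le (θ : Fin d → ℝ) (s : Finset (Finset (Fin d))) (v : Finset (Fin d))
    {ℓ : Fin d → ℝ} (hℓ : 0 ≤ ℓ) :
    winProb θ s v * (1 - ∑ i ∈ v, ℓ i) ≤ winProb (θ + ℓ) s v := by
  classical
  set a : Fin d → ℝ := fun i => if i ∈ v then ℓ i else 0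
  have ha : 0 ≤ a := fun i => by unfold a; split_ifs; exacts [hℓ i, le_rfl]
  have hal : a ≤ ℓ := fun i => by unfold a; split_ifs; exacts [le_rfl, hℓ i]
  have hsum : ∑ i, a i = ∑ i ∈ v, ℓ i := by simp [a, Finset.sum_ite_mem]
  set B := {z : Fin d → ℝ | IsUniqueMin (θ - z) s v}
  set B' := {z : Fin d → ℝ | IsUniqueMin (θ + ℓ - z) s v}
  -- Lowering `z` by `a` adds `ℓ` to the cost of `v` and at most `ℓ` to any other cost.
  have hincl : (· - a) ⁻¹' B ⊆ B' := fun z hz =>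
    hz.mono (fun i => by simp only [Pi.sub_apply, Pi.add_apply]; linarith [hal i])
      (fun i hi => by simp only [Pi.sub_apply, Pi.add_apply, hi, ↓reduceIte, a]; ring)
  have hshift : ENNReal.ofReal (exp (-∑ i ∈ v, ℓ i)) * expPi d B ≤ expPi d B' := calc
    _ = (ENNReal.ofReal (exp (-∑ i, a i)) • expPi d) B := by rw [hsum]; rfl
    _ ≤ (expPi d).map (· - a) B := exp_neg_sum_smul_expPi_le_map_sub ha B
    _ ≤ expPi d B' := by
      rw [Measure.map_apply (measurable_sub_const a) (measurableSet_isUniqueMin_sub θ s v)]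
      exact measure_mono hincl
  have hreal : exp (-∑ i ∈ v, ℓ i) * winProb θ s v ≤ winProb (θ + ℓ) s v := by
    simpa [winProb, measureReal_def, ENNReal.toReal_mul, (exp_pos _).le] using
      ENNReal.toReal_mono (measure_ne_top _ _) hshift
  calc winProb θ s v * (1 - ∑ i ∈ v, ℓ i)
      ≤ winProb θ s v * exp (-∑ i ∈ v, ℓ i) := by
        gcongr
        · exact measureReal_nonneg
        · linarith [add_one_le_exp (-∑ i ∈ v, ℓ i)]
    _ ≤ winProb (θ + ℓ) s v := by linarith

theorem sum_winProb_mul_le (θ : Fin d → ℝ) (s : Finset (Finset (Fin d))) {η : ℝ} (hη : 0 ≤ η)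
    {ℓ : Fin d → ℝ} (hℓ : 0 ≤ ℓ) :
    ∑ v, winProb θ s v * ∑ i ∈ v, ℓ i
      ≤ ∑ v, winProb (θ + η • ℓ) s v * ∑ i ∈ v, ℓ i
        + η * ∑ v, winProb θ s v * (∑ i ∈ v, ℓ i) ^ 2 := by
  rw [Finset.mul_sum, ← Finset.sum_add_distrib]
  refine Finset.sum_le_sum fun v _ => ?_
  have hx : 0 ≤ ∑ i ∈ v, ℓ i := Finset.sum_nonneg fun i _ => hℓ i
  have h := winProb_mul_le θ s v (smul_nonneg hη hℓ)
  simp only [Pi.smul_apply, smul_eq_mul, ← Finset.mul_sum] at h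
  nlinarith [mul_le_mul_of_nonneg_right h hx]

end WinProb

namespace ProbabilityTheory.IndepFun

variable {Ω β γ : Type*} [MeasurableSpace Ω] [MeasurableSpace β] [MeasurableSpace γ]
  {μ : Measure Ω} [IsFiniteMeasure μ] {Z : Ω → β} {W : Ω → γ}

theorem ae_of_forall_ae (h : IndepFun Z W μ) (hZ : Measurable Z) (hW : Measurable W)
    {p : β × γ → Prop} (hp : MeasurableSet {x | p x}) (hsec : ∀ w, ∀ᵐ z ∂μ.map Z, p (z, w)) :
    ∀ᵐ ω ∂μ, p (Z ω, W ω) := by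
  rw [← ae_map_iff (hZ.prodMk hW).aemeasurable hp,
    (indepFun_iff_map_prod_eq_prod_map_map hZ.aemeasurable hW.aemeasurable).1 h,
    Measure.ae_prod_iff_ae_ae hp]
  exact (Measure.ae_ae_comm (p := fun z w => p (z, w)) hp).2 (ae_of_all _ hsec)

theorem integrable_prod (h : IndepFun Z W μ) (hZ : Measurable Z) (hW : Measurable W)
    {G : β × γ → ℝ} (hG : Measurable G) (hint : Integrable (fun ω => G (Z ω, W ω)) μ) :
    Integrable G ((μ.map Z).prod (μ.map W)) := by
  rw [← (indepFun_iff_map_prod_eq_prod_map_map hZ.aemeasurable hW.aemeasurable).1 h]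
  exact (integrable_map_measure hG.aestronglyMeasurable (hZ.prodMk hW).aemeasurable).2 hint

theorem integral_comp_eq_integral_integral (h : IndepFun Z W μ) (hZ : Measurable Z)
    (hW : Measurable W) {G : β × γ → ℝ} (hG : Measurable G)
    (hint : Integrable (fun ω => G (Z ω, W ω)) μ) :
    ∫ ω, G (Z ω, W ω) ∂μ = ∫ ω, ∫ z, G (z, W ω) ∂μ.map Z ∂μ := by
  have hGint := h.integrable_prod hZ hW hG hint
  rw [← integral_map (hZ.prodMk hW).aemeasurable hG.aestronglyMeasurable,
    (indepFun_iff_map_prod_eq_prod_map_map hZ.aemeasurable hW.aemeasurable).1 h,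
    integral_prod_symm _ hGint, integral_map hW.aemeasurable hGint.integral_prod_right.1]

theorem integrable_integral_comp (h : IndepFun Z W μ) (hZ : Measurable Z) (hW : Measurable W)
    {G : β × γ → ℝ} (hG : Measurable G) (hint : Integrable (fun ω => G (Z ω, W ω)) μ) :
    Integrable (fun ω => ∫ z, G (z, W ω) ∂μ.map Z) μ := by
  have hGint := (h.integrable_prod hZ hW hG hint).integral_prod_right
  exact (integrable_map_measure hGint.1 hW.aemeasurable).1 hGint

end ProbabilityTheory.IndepFun

namespace ProbabilityTheory.IndepFun

variable {Ω γ : Type*} [MeasurableSpace Ω] [MeasurableSpace γ] {μ : Measure Ω}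
  [IsFiniteMeasure μ] {d : ℕ} {Z : Ω → Fin d → ℝ} {W : Ω → γ}

theorem ae_isUniqueMin (h : IndepFun Z W μ) (hZ : Measurable Z) (hW : Measurable W)
    (hlaw : μ.map Z = expPi d) {θ : γ → Fin d → ℝ} (hθ : Measurable θ)
    {s : Ω → Finset (Finset (Fin d))} {V : Ω → Finset (Fin d)} (hV : ∀ ω, V ω ∈ s ω)
    (hmin : ∀ ω, ∀ u ∈ s ω, ∑ i ∈ V ω, (θ (W ω) - Z ω) i ≤ ∑ i ∈ u, (θ (W ω) - Z ω) i) :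
    ∀ᵐ ω ∂μ, IsUniqueMin (θ (W ω) - Z ω) (s ω) (V ω) := by
  have hties : ∀ᵐ ω ∂μ, ∀ u w : Finset (Fin d), u ≠ w →
      ∑ i ∈ u, (θ (W ω) - Z ω) i ≠ ∑ i ∈ w, (θ (W ω) - Z ω) i := by
    simp only [ae_all_iff]
    intro u w huw
    refine h.ae_of_forall_ae hZ hW
      (p := fun x => ∑ i ∈ u, (θ x.2 - x.1) i ≠ ∑ i ∈ w, (θ x.2 - x.1) i)
      (measurableSet_setOfPred.2 (by fun_prop)) fun w' => ?_
    rw [hlaw]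
    exact ae_expPi_sum_ne (θ w') huw
  filter_upwards [hties] with ω hω using isUniqueMin_of_forall_le (hV ω) (hmin ω) hω

variable {θ : γ → Fin d → ℝ} {σ : γ → Finset (Finset (Fin d))} {g : γ → Finset (Fin d) → ℝ}
  {V : Ω → Finset (Fin d)}

theorem integral_eq_integral_sum_winProb (h : IndepFun Z W μ) (hZ : Measurable Z)
    (hW : Measurable W) (hlaw : μ.map Z = expPi d) (hθ : Measurable θ) (hσ : Measurable σ)
    (hg : Measurable g) (hV : ∀ᵐ ω ∂μ, IsUniqueMin (θ (W ω) - Z ω) (σ (W ω)) (V ω))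
    (hint : Integrable (fun ω => g (W ω) (V ω)) μ) :
    ∫ ω, g (W ω) (V ω) ∂μ = ∫ ω, ∑ v, winProb (θ (W ω)) (σ (W ω)) v * g (W ω) v ∂μ := by
  have hae := ae_eq_uniqueMinValue hV fun ω => g (W ω)
  rw [integral_congr_ae hae, h.integral_comp_eq_integral_integral hZ hW
    (measurable_uniqueMinValue_comp hθ hσ hg) (hint.congr hae), hlaw]
  simp only [_root_.integral_uniqueMinValue]

theorem integrable_sum_winProb (h : IndepFun Z W μ) (hZ : Measurable Z)
    (hW : Measurable W) (hlaw : μ.map Z = expPi d) (hθ : Measurable θ) (hσ : Measurable σ)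
    (hg : Measurable g) (hV : ∀ᵐ ω ∂μ, IsUniqueMin (θ (W ω) - Z ω) (σ (W ω)) (V ω))
    (hint : Integrable (fun ω => g (W ω) (V ω)) μ) :
    Integrable (fun ω => ∑ v, winProb (θ (W ω)) (σ (W ω)) v * g (W ω) v) μ := by
  have hae := ae_eq_uniqueMinValue hV fun ω => g (W ω)
  have := h.integrable_integral_comp hZ hW (measurable_uniqueMinValue_comp hθ hσ hg)
    (hint.congr hae)
  simpa only [hlaw, _root_.integral_uniqueMinValue] using this

theorem integral_sum_sub_sum_le_mul_integral_sq (h : IndepFun Z W μ) (hZ : Measurable Z)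
    (hW : Measurable W) (hlaw : μ.map Z = expPi d) {ℓ : γ → Fin d → ℝ} (hθ : Measurable θ)
    (hσ : Measurable σ) (hℓ : Measurable ℓ) (hℓ₀ : ∀ ω, 0 ≤ ℓ (W ω)) {η : ℝ} (hη : 0 ≤ η)
    {V' : Ω → Finset (Fin d)} (hV : ∀ᵐ ω ∂μ, IsUniqueMin (θ (W ω) - Z ω) (σ (W ω)) (V ω))
    (hV' : ∀ᵐ ω ∂μ, IsUniqueMin (θ (W ω) + η • ℓ (W ω) - Z ω) (σ (W ω)) (V' ω))
    (hint₁ : Integrable (fun ω => ∑ i ∈ V ω, ℓ (W ω) i - ∑ i ∈ V' ω, ℓ (W ω) i) μ)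
    (hint₂ : Integrable (fun ω => (∑ i ∈ V ω, ℓ (W ω) i) ^ 2) μ) :
    ∫ ω, (∑ i ∈ V ω, ℓ (W ω) i - ∑ i ∈ V' ω, ℓ (W ω) i) ∂μ
      ≤ η * ∫ ω, (∑ i ∈ V ω, ℓ (W ω) i) ^ 2 ∂μ := by
  have hθ' : Measurable fun w => θ w + η • ℓ w := by fun_prop
  have hg : Measurable fun w (v : Finset (Fin d)) => ∑ i ∈ v, ℓ w i := by fun_prop
  have hg₂ : Measurable fun w (v : Finset (Fin d)) => (∑ i ∈ v, ℓ w i) ^ 2 := by fun_prop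
  have hX : Integrable (fun ω => ∑ i ∈ V ω, ℓ (W ω) i) μ :=
    ((memLp_two_iff_integrable_sq (((measurable_uniqueMinValue_comp hθ hσ hg).comp
      (hZ.prodMk hW)).aestronglyMeasurable.congr (ae_eq_uniqueMinValue hV _).symm)).2
        hint₂).integrable one_le_two
  have hX' : Integrable (fun ω => ∑ i ∈ V' ω, ℓ (W ω) i) μ :=
    (hX.sub hint₁).congr (ae_of_all _ fun ω => sub_sub_cancel _ _)
  have hA := h.integrable_sum_winProb hZ hW hlaw hθ hσ hg hV hX
  have hB := h.integrable_sum_winProb hZ hW hlaw hθ' hσ hg hV' hX'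
  have hC := h.integrable_sum_winProb hZ hW hlaw hθ hσ hg₂ hV hint₂
  rw [integral_sub hX hX', sub_le_iff_le_add',
    h.integral_eq_integral_sum_winProb hZ hW hlaw hθ hσ hg hV hX,
    h.integral_eq_integral_sum_winProb hZ hW hlaw hθ' hσ hg hV' hX',
    h.integral_eq_integral_sum_winProb hZ hW hlaw hθ hσ hg₂ hV hint₂, ← integral_const_mul,
    ← integral_add hB (hC.const_mul η)]
  exact integral_mono hA (hB.add (hC.const_mul η)) fun ω =>
    sum_winProb_mul_le (θ (W ω)) (σ (W ω)) hη (hℓ₀ ω)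

end ProbabilityTheory.IndepFun

theorem fpl_stability_general
    (d : ℕ)
    (η : ℝ) (hη : 0 < η) (L : Fin d → ℝ)
    {Ω : Type*} [MeasurableSpace Ω] (μ : Measure Ω) [IsProbabilityMeasure μ]
    (Stilde : Ω → Finset (Finset (Fin d))) (hSMeas : Measurable Stilde)
    (Ztilde : Ω → Fin d → ℝ) (hZMeas : Measurable Ztilde)
    (hZLaw : μ.map Ztilde = expPi d)
    (lhat : Ω → Fin d → ℝ) (hlhatMeas : Measurable lhat)
    (hlhatNonneg : ∀ ω i, 0 ≤ lhat ω i)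
    -- `Z̃` is independent of everything else
    (hIndep : IndepFun Ztilde (fun ω => (Stilde ω, lhat ω)) μ)
    -- the two perturbed leaders
    (Vtilde Vtilde' : Ω → Finset (Fin d))
    (hVmem : ∀ ω, Vtilde ω ∈ Stilde ω)
    (hVmin : ∀ ω, ∀ v ∈ Stilde ω,
      ∑ i ∈ Vtilde ω, (η * L i - Ztilde ω i) ≤ ∑ i ∈ v, (η * L i - Ztilde ω i))
    (hV'mem : ∀ ω, Vtilde' ω ∈ Stilde ω)
    (hV'min : ∀ ω, ∀ v ∈ Stilde ω,
      ∑ i ∈ Vtilde' ω, (η * (L i + lhat ω i) - Ztilde ω i)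
        ≤ ∑ i ∈ v, (η * (L i + lhat ω i) - Ztilde ω i))
    -- integrability of the relevant quantities
    (hint₁ : Integrable (fun ω => (∑ i ∈ Vtilde ω, lhat ω i) - ∑ i ∈ Vtilde' ω, lhat ω i) μ)
    (hint₂ : Integrable (fun ω => (∑ i ∈ Vtilde ω, lhat ω i) ^ 2) μ) :
    ∫ ω, ((∑ i ∈ Vtilde ω, lhat ω i) - ∑ i ∈ Vtilde' ω, lhat ω i) ∂μ
      ≤ η * ∫ ω, (∑ i ∈ Vtilde ω, lhat ω i) ^ 2 ∂μ := by
  have hW : Measurable fun ω => (Stilde ω, lhat ω) := hSMeas.prodMk hlhatMeas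
  have hV' := hIndep.ae_isUniqueMin hZMeas hW hZLaw
    (θ := fun w i => η * (L i + w.2 i)) (by fun_prop) hV'mem hV'min
  refine hIndep.integral_sum_sub_sum_le_mul_integral_sq hZMeas hW hZLaw
    (θ := fun _ i => η * L i) measurable_const measurable_fst measurable_snd hlhatNonneg hη.le
    (hIndep.ae_isUniqueMin hZMeas hW hZLaw measurable_const hVmem hVmin) ?_ hint₁ hint₂
  filter_upwards [hV'] with ω hω
  convert hω using 2
  ext i
  simp [mul_add]

/-- **Per-round stability of FPL (Lemma 2).**
Decision vectors in `{0,1}^d` are encoded by their supports. Fix `η > 0` and a vector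
`L ∈ ℝ^d`. Let `S̃ ⊆ S` be a nonempty random decision set, `Z̃` a perturbation vector with
i.i.d. standard exponential components, and `ℓ̂` a random nonnegative vector, with `Z̃`
independent of `(S̃, ℓ̂)`. If `Ṽ = argmin_{v ∈ S̃} vᵀ(η L - Z̃)` and
`Ṽ' = argmin_{v ∈ S̃} vᵀ(η (L + ℓ̂) - Z̃)` (same realization of `Z̃` and `S̃`), then
`E[(Ṽ - Ṽ')ᵀ ℓ̂] ≤ η E[(Ṽᵀ ℓ̂)²]`. -/
theorem fpl_stability
    (d : ℕ) (S : Finset (Finset (Fin d))) (hS : S.Nonempty)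
    (η : ℝ) (hη : 0 < η) (L : Fin d → ℝ)
    {Ω : Type*} [MeasurableSpace Ω] (μ : Measure Ω) [IsProbabilityMeasure μ]
    (Stilde : Ω → Finset (Finset (Fin d))) (hSMeas : Measurable Stilde)
    (hSsub : ∀ ω, Stilde ω ⊆ S ∧ (Stilde ω).Nonempty)
    (Ztilde : Ω → Fin d → ℝ) (hZMeas : Measurable Ztilde)
    (hZLaw : μ.map Ztilde = expPi d)
    (lhat : Ω → Fin d → ℝ) (hlhatMeas : Measurable lhat)
    (hlhatNonneg : ∀ ω i, 0 ≤ lhat ω i)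
    -- `Z̃` is independent of everything else
    (hIndep : IndepFun Ztilde (fun ω => (Stilde ω, lhat ω)) μ)
    -- the two perturbed leaders
    (Vtilde Vtilde' : Ω → Finset (Fin d))
    (hVmem : ∀ ω, Vtilde ω ∈ Stilde ω)
    (hVmin : ∀ ω, ∀ v ∈ Stilde ω,
      ∑ i ∈ Vtilde ω, (η * L i - Ztilde ω i) ≤ ∑ i ∈ v, (η * L i - Ztilde ω i))
    (hV'mem : ∀ ω, Vtilde' ω ∈ Stilde ω)
    (hV'min : ∀ ω, ∀ v ∈ Stilde ω,
      ∑ i ∈ Vtilde' ω, (η * (L i + lhat ω i) - Ztilde ω i)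
        ≤ ∑ i ∈ v, (η * (L i + lhat ω i) - Ztilde ω i))
    -- integrability of the relevant quantities
    (hint₁ : Integrable (fun ω => (∑ i ∈ Vtilde ω, lhat ω i) - ∑ i ∈ Vtilde' ω, lhat ω i) μ)
    (hint₂ : Integrable (fun ω => (∑ i ∈ Vtilde ω, lhat ω i) ^ 2) μ) :
    ∫ ω, ((∑ i ∈ Vtilde ω, lhat ω i) - ∑ i ∈ Vtilde' ω, lhat ω i) ∂μ
      ≤ η * ∫ ω, (∑ i ∈ Vtilde ω, lhat ω i) ^ 2 ∂μ :=
  fpl_stability_general d η hη L μ Stilde hSMeas Ztilde hZMeas hZLaw lhat hlhatMeas hlhatNonneg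
    hIndep Vtilde Vtilde' hVmem hVmin hV'mem hV'min hint₁ hint₂
end
end
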